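/- arXiv:2304.05651 — 2 statements merged into one kernel-verified Lean document; each statement's English description precedes it below -/
import Mathlib

section
/- For all n ≥ 0, φ_{n,λ}(x) = ∑_{k=0}^n S_{2,λ}(n,k) x^k, where S_{2,λ}(n,k) are the degenerate Stirling numbers of the second kind. -/
open Real MeasureTheory ProbabilityTheory Filter Asymptotics

/-- The degenerate falling factorial `(x)_{n,l} = x(x-l)(x-2l)...(x-(n-1)l)`. -/
noncomputable def dFall (l x : ℝ) (n : ℕ) : ℝ := ∏ i ∈ Finset.range n, (x - i * l)

/-- The degenerate exponential `e_l^x(t) = (1 + l t)^(x/l)`. -/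
noncomputable def degExp (l x t : ℝ) : ℝ := (1 + l * t) ^ (x / l)

/-!
Since `e_λ^k(t) = (1 + λt)^{k/λ}`, the binomial series gives
`e_λ^k(t) = ∑_n (k)_{n,λ} t^n/n!` for `|λt| < 1`, so `e^{x e_λ(t)} = ∑_k x^k/k! e_λ^k(t)` expands
into a double series in `(k, n)`. It converges absolutely because `|(k)_{n,λ}| ≤ (k)_{n,-|λ|}`,
which is the same double series at `(-|λ|, |x|, |t|)` with nonnegative terms. Summing over `k`
first instead, `(k)_{n,λ} = ∑_j S_{2,λ}(n,j) (k)_j` and `∑_k (k)_j x^k/k! = x^j e^x` give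
`e^{x(e_λ(t)-1)} = ∑_n (∑_j S_{2,λ}(n,j) x^j) t^n/n!`, and the theorem follows by comparing
coefficients of two power series in `t` with the same sum near `0`.
-/

open Finset
open scoped NNReal

theorem hasFPowerSeriesOnBall_ofScalars_of_hasSum {𝕜 : Type*} [RCLike 𝕜] {f : 𝕜 → 𝕜}
    {c : ℕ → 𝕜} {r : ℝ≥0} (hr : 0 < r)
    (hf : ∀ t : 𝕜, ‖t‖ < r → HasSum (fun n ↦ c n * t ^ n) (f t)) :
    HasFPowerSeriesOnBall f (FormalMultilinearSeries.ofScalars 𝕜 c) 0 r where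
  r_le := by
    refine ENNReal.le_of_forall_pos_nnreal_lt fun ρ _ hρ ↦ ?_
    have hρ' : ‖((ρ : ℝ) : 𝕜)‖ < r := by simpa using hρ
    refine FormalMultilinearSeries.le_radius_of_tendsto _ (l := 0) ?_
    simpa [FormalMultilinearSeries.ofScalars_norm] using
      (hf _ hρ').summable.tendsto_atTop_zero.norm
  r_pos := by exact_mod_cast hr
  hasSum {y} hy := by
    have hy' : ‖y‖ < r := by simpa [enorm_eq_nnnorm] using hy
    simpa [FormalMultilinearSeries.ofScalars_apply_eq, mul_comm] using hf y hy'

theorem eq_of_hasSum_mul_pow {𝕜 : Type*} [RCLike 𝕜] {f : 𝕜 → 𝕜} {c d : ℕ → 𝕜} {r : ℝ≥0}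
    (hr : 0 < r) (hc : ∀ t : 𝕜, ‖t‖ < r → HasSum (fun n ↦ c n * t ^ n) (f t))
    (hd : ∀ t : 𝕜, ‖t‖ < r → HasSum (fun n ↦ d n * t ^ n) (f t)) : c = d :=
  FormalMultilinearSeries.ofScalars_series_injective 𝕜 𝕜 <|
    (hasFPowerSeriesOnBall_ofScalars_of_hasSum hr hc).hasFPowerSeriesAt.eq_formalMultilinearSeries
      (hasFPowerSeriesOnBall_ofScalars_of_hasSum hr hd).hasFPowerSeriesAt

section

-- `Nat` is opened only here: its scoped notation `φ` would capture the binder `φ` of the theorem.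
open Nat

theorem Real.hasSum_pow_div_factorial (x : ℝ) : HasSum (fun n ↦ x ^ n / n !) (exp x) :=
  exp_eq_exp_ℝ ▸ NormedSpace.expSeries_div_hasSum_exp x

theorem hasSum_descFactorial_mul_pow_div_factorial (j : ℕ) (x : ℝ) :
    HasSum (fun k ↦ k.descFactorial j * x ^ k / k !) (x ^ j * exp x) := by
  rw [← hasSum_nat_add_iff' j]
  have hlow : ∑ k ∈ range j, (k.descFactorial j * x ^ k / k ! : ℝ) = 0 :=
    sum_eq_zero fun k hk ↦ by simp [Nat.descFactorial_eq_zero_iff_lt.2 (mem_range.1 hk)]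
  rw [hlow, sub_zero]
  have hshift (k : ℕ) : ((k + j).descFactorial j * x ^ (k + j) / (k + j) ! : ℝ) =
      x ^ j * (x ^ k / k !) := by
    have := Nat.factorial_mul_descFactorial (Nat.le_add_left j k)
    rw [Nat.add_sub_cancel] at this
    rw [← this, pow_add]
    push_cast
    field_simp
  simpa only [hshift] using (Real.hasSum_pow_div_factorial x).mul_left (x ^ j)

theorem Ring.factorial_mul_choose_eq_prod_range {K : Type*} [Field K] [CharZero K] (a : K)
    (n : ℕ) : n ! * Ring.choose a n = ∏ i ∈ range n, (a - i) := by
  rw [Ring.choose_eq_smul, ← Polynomial.aeval_eq_smeval, Polynomial.aeval_def,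
    ← Polynomial.eval_map, descPochhammer_map, descPochhammer_eval_eq_prod_range, smul_eq_mul,
    ← mul_assoc, mul_inv_cancel₀ (Nat.cast_ne_zero.2 n.factorial_ne_zero), one_mul]

theorem dFall_eq_pow_mul_factorial_mul_choose {l : ℝ} (hl : l ≠ 0) (a : ℝ) (n : ℕ) :
    dFall l a n = l ^ n * (n ! * Ring.choose (a / l) n) := by
  rw [Ring.factorial_mul_choose_eq_prod_range, pow_eq_prod_const, ← prod_mul_distrib]
  refine prod_congr rfl fun i _ ↦ ?_
  field_simp

theorem dFall_one_natCast (k j : ℕ) : dFall 1 k j = k.descFactorial j := by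
  simp only [dFall, mul_one, ← descPochhammer_eval_eq_prod_range,
    descPochhammer_eval_eq_descFactorial]

theorem abs_dFall_le (l x : ℝ) (n : ℕ) : |dFall l x n| ≤ dFall (-|l|) |x| n := by
  rw [dFall, dFall, abs_prod]
  refine prod_le_prod (fun _ _ ↦ abs_nonneg _) fun i _ ↦ ?_
  calc |x - i * l| ≤ |x| + |i * l| := abs_sub _ _
    _ = |x| - i * -|l| := by rw [abs_mul, Nat.abs_cast]; ring

theorem dFall_nonneg {l x : ℝ} (hl : l ≤ 0) (hx : 0 ≤ x) (n : ℕ) : 0 ≤ dFall l x n :=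
  prod_nonneg fun i _ ↦ by nlinarith [i.cast_nonneg (α := ℝ)]

theorem hasSum_dFall_mul_pow_div_factorial {l : ℝ} (hl : l ≠ 0) (a : ℝ) {t : ℝ}
    (ht : |l * t| < 1) : HasSum (fun n ↦ dFall l a n * t ^ n / n !) (degExp l a t) := by
  have hball : l * t ∈ Metric.eball (0 : ℝ) 1 := by
    rw [Metric.mem_eball, edist_dist, Real.dist_eq, sub_zero]
    exact ENNReal.ofReal_lt_one.2 ht
  have hbinom := Real.one_add_rpow_hasFPowerSeriesOnBall_zero (a := a / l) |>.hasSum hball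
  have hterm (n : ℕ) :
      (binomialSeries ℝ (a / l) n fun _ ↦ l * t) = dFall l a n * t ^ n / n ! := by
    rw [dFall_eq_pow_mul_factorial_mul_choose hl]
    simp only [binomialSeries_apply, List.ofFn_const, List.prod_replicate, smul_eq_mul]
    field_simp
    ring
  simpa only [hterm, zero_add, degExp] using hbinom

theorem degExp_natCast_eq_pow {l t : ℝ} (h : 0 ≤ 1 + l * t) (k : ℕ) :
    degExp l k t = degExp l 1 t ^ k := by
  rw [degExp, degExp, ← rpow_natCast, ← rpow_mul h]
  ring_nf

theorem hasSum_pow_div_factorial_mul_degExp {l t : ℝ} (h : 0 ≤ 1 + l * t) (x : ℝ) :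
    HasSum (fun k : ℕ ↦ x ^ k / k ! * degExp l k t) (exp (x * degExp l 1 t)) := by
  simpa only [degExp_natCast_eq_pow h, mul_pow, div_mul_eq_mul_div, mul_comm] using
    Real.hasSum_pow_div_factorial (x * degExp l 1 t)

theorem hasSum_pow_div_factorial_mul_of_eq_sum_dFall_one {f : ℝ → ℝ} {s : ℕ → ℝ} {m : ℕ}
    (hf : ∀ y, f y = ∑ j ∈ range m, s j * dFall 1 y j) (x : ℝ) :
    HasSum (fun k : ℕ ↦ x ^ k / k ! * f k) (exp x * ∑ j ∈ range m, s j * x ^ j) := by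
  have hterm (k : ℕ) :
      x ^ k / k ! * f k = ∑ j ∈ range m, s j * (k.descFactorial j * x ^ k / k !) := by
    rw [hf, mul_sum]
    refine sum_congr rfl fun j _ ↦ ?_
    rw [dFall_one_natCast]
    ring
  rw [mul_sum]
  simpa only [hterm, mul_left_comm (exp x), mul_comm (exp x)] using
    hasSum_sum fun j _ ↦ (hasSum_descFactorial_mul_pow_div_factorial j x).mul_left (s j)

noncomputable def bellDoubleTerm (l x t : ℝ) (p : ℕ × ℕ) : ℝ :=
  x ^ p.1 / p.1 ! * (dFall l p.1 p.2 * t ^ p.2 / p.2 !)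

theorem hasSum_bellDoubleTerm_row {l : ℝ} (hl : l ≠ 0) (x : ℝ) {t : ℝ} (ht : |l * t| < 1)
    (k : ℕ) : HasSum (fun n ↦ bellDoubleTerm l x t (k, n)) (x ^ k / k ! * degExp l k t) :=
  (hasSum_dFall_mul_pow_div_factorial hl k ht).mul_left _

theorem hasSum_bellDoubleTerm_column {l : ℝ} {n : ℕ} {s : ℕ → ℝ}
    (hs : ∀ y, dFall l y n = ∑ j ∈ range (n + 1), s j * dFall 1 y j) (x t : ℝ) :
    HasSum (fun k ↦ bellDoubleTerm l x t (k, n))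
      (exp x * (∑ j ∈ range (n + 1), s j * x ^ j) * t ^ n / n !) := by
  simpa only [bellDoubleTerm, mul_div_assoc, ← mul_assoc] using
    (hasSum_pow_div_factorial_mul_of_eq_sum_dFall_one hs x).mul_right (t ^ n / n !)

theorem abs_bellDoubleTerm_le (l x t : ℝ) (p : ℕ × ℕ) :
    |bellDoubleTerm l x t p| ≤ bellDoubleTerm (-|l|) |x| |t| p := by
  simp only [bellDoubleTerm, abs_mul, abs_div, abs_pow, Nat.abs_cast]
  gcongr
  simpa using abs_dFall_le l p.1 p.2

theorem summable_bellDoubleTerm {l : ℝ} (hl : l ≠ 0) (x : ℝ) {t : ℝ} (ht : |l * t| < 1) :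
    Summable (bellDoubleTerm l x t) := by
  have hl' : -|l| ≠ 0 := by simpa using hl
  have ht' : abs (-|l| * |t|) < 1 := by rwa [abs_mul, abs_neg, abs_abs, abs_abs, ← abs_mul]
  have hnonneg : 0 ≤ bellDoubleTerm (-|l|) |x| |t| := fun p ↦ by
    have := dFall_nonneg (neg_nonpos.2 (abs_nonneg l)) (Nat.cast_nonneg (α := ℝ) p.1) p.2
    unfold bellDoubleTerm
    positivity
  have hmajorant : Summable (bellDoubleTerm (-|l|) |x| |t|) := by
    refine (summable_prod_of_nonneg hnonneg).2
      ⟨fun k ↦ (hasSum_bellDoubleTerm_row hl' _ ht' k).summable, ?_⟩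
    simp_rw [(hasSum_bellDoubleTerm_row hl' _ ht' _).tsum_eq]
    exact (hasSum_pow_div_factorial_mul_degExp (by linarith [(abs_lt.1 ht').1]) _).summable
  exact .of_norm_bounded hmajorant (abs_bellDoubleTerm_le l x t)

theorem hasSum_bellDoubleTerm {l : ℝ} (hl : l ≠ 0) (x : ℝ) {t : ℝ} (ht : |l * t| < 1) :
    HasSum (bellDoubleTerm l x t) (exp (x * degExp l 1 t)) := by
  have hrows := (summable_bellDoubleTerm hl x ht).hasSum.prod_fiberwise
    (hasSum_bellDoubleTerm_row hl x ht)
  rw [← hrows.unique (hasSum_pow_div_factorial_mul_degExp (by linarith [(abs_lt.1 ht).1]) x)]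
  exact (summable_bellDoubleTerm hl x ht).hasSum

theorem hasSum_exp_mul_degExp_sub_one {l : ℝ} (hl : l ≠ 0) {S : ℕ → ℕ → ℝ}
    (hS : ∀ (n : ℕ) (y : ℝ), dFall l y n = ∑ j ∈ range (n + 1), S n j * dFall 1 y j)
    (x : ℝ) {t : ℝ} (ht : |l * t| < 1) :
    HasSum (fun n ↦ (∑ j ∈ range (n + 1), S n j * x ^ j) * t ^ n / n !)
      (exp (x * (degExp l 1 t - 1))) := by
  have hswap := (Equiv.prodComm ℕ ℕ).hasSum_iff.2 (hasSum_bellDoubleTerm hl x ht)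
  have hcols := hswap.prod_fiberwise fun n ↦ hasSum_bellDoubleTerm_column (hS n) x t
  have hterm (c : ℝ) (n : ℕ) : exp (-x) * (exp x * c * t ^ n / n !) = c * t ^ n / n ! := by
    rw [exp_neg]
    field_simp
  have hvalue : exp (-x) * exp (x * degExp l 1 t) = exp (x * (degExp l 1 t - 1)) := by
    rw [← exp_add]
    ring_nf
  simpa only [hterm, hvalue] using hcols.mul_left (exp (-x))

end

theorem degenerate_bell_eq_sum_degenerate_stirling (l : ℝ) (hl : l ≠ 0)
    (φ : ℕ → ℝ → ℝ)
    (hφ : ∀ x t : ℝ, |l * t| < 1 →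
      HasSum (fun n : ℕ => φ n x * t ^ n / (n.factorial : ℝ))
        (Real.exp (x * (degExp l 1 t - 1))))
    (S : ℕ → ℕ → ℝ)
    (hS : ∀ (n : ℕ) (x : ℝ), dFall l x n = ∑ k ∈ Finset.range (n + 1), S n k * dFall 1 x k)
    (n : ℕ) (x : ℝ) :
    φ n x = ∑ k ∈ Finset.range (n + 1), S n k * x ^ k := by
  have hr : (0 : ℝ≥0) < ‖l‖₊⁻¹ := inv_pos.2 (nnnorm_pos.2 hl)
  have hlt (t : ℝ) (ht : ‖t‖ < (‖l‖₊⁻¹ : ℝ≥0)) : |l * t| < 1 := by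
    rw [NNReal.coe_inv, coe_nnnorm] at ht
    calc |l * t| = ‖l‖ * ‖t‖ := abs_mul l t
      _ < ‖l‖ * ‖l‖⁻¹ := by gcongr
      _ = 1 := mul_inv_cancel₀ (norm_ne_zero_iff.2 hl)
  have hcoeff := eq_of_hasSum_mul_pow (f := fun t ↦ exp (x * (degExp l 1 t - 1)))
    (c := fun n ↦ φ n x / n.factorial)
    (d := fun n ↦ (∑ k ∈ range (n + 1), S n k * x ^ k) / n.factorial) hr
    (fun t ht ↦ by simpa only [div_mul_eq_mul_div] using hφ x t (hlt t ht))
    (fun t ht ↦ by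
      simpa only [div_mul_eq_mul_div] using hasSum_exp_mul_degExp_sub_one hl hS x (hlt t ht))
  exact (div_left_inj' (by positivity)).1 (congrFun hcoeff n)
end

section
/- If X ∼ DB_λ(α,θ), then Var(X) = θα(1 + θ(1−λ) e_λ^{−λ}(θ)) e_λ^{1−λ}(θ), where e_λ^x(θ) = (1+λθ)^{x/λ}. -/
open Real MeasureTheory ProbabilityTheory Filter Asymptotics

/-!
With `c n = φ n α / n!` and `F t = exp (α (e_λ(t) - 1))`, the law of `X` is the power-series
distribution `P {X = n} = c n θ ^ n / F θ`. Applying the Euler operator `t d/dt` termwise to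
`∑ c n t ^ n = F t` gives `E[X] = θ F'(θ) / F(θ)` and `E[X²] = θ (t F'(t))'(θ) / F(θ)`, and
`F' = α e_λ^{1-λ} F` turns these into the stated variance. Termwise differentiation needs
`∑ |c n| r ^ n < ∞` for every `r > 0`, which follows from `c n ≥ 0`; and the `c n` are
nonnegative because a real sequence whose sum and whose sum of positive parts both equal `1`
has no negative term.
-/

open Topology

section DegenerateExponential

variable {l t : ℝ}

theorem degExp_mul_degExp (x y : ℝ) (ht : 0 < 1 + l * t) :
    degExp l x t * degExp l y t = degExp l (x + y) t := by
  rw [degExp, degExp, degExp, ← rpow_add ht, add_div]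

theorem hasDerivAt_degExp (hl : l ≠ 0) (x : ℝ) (ht : 0 < 1 + l * t) :
    HasDerivAt (degExp l x) (x * degExp l (x - l) t) t := by
  refine ((((hasDerivAt_id' t).const_mul l).const_add 1).rpow_const (p := x / l)
    (Or.inl ht.ne')).congr_deriv ?_
  rw [degExp, sub_div, div_self hl]
  field_simp

theorem hasDerivAt_exp_degExp (hl : l ≠ 0) (α : ℝ) (ht : 0 < 1 + l * t) :
    HasDerivAt (fun s => exp (α * (degExp l 1 s - 1)))
      (α * degExp l (1 - l) t * exp (α * (degExp l 1 t - 1))) t := by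
  convert (((hasDerivAt_degExp hl 1 ht).sub_const 1).const_mul α).exp using 1
  ring

theorem deriv_mul_deriv_exp_degExp (hl : l ≠ 0) (α : ℝ) (ht : 0 < 1 + l * t) :
    deriv (fun s => s * deriv (fun u => exp (α * (degExp l 1 u - 1))) s) t =
      α * degExp l (1 - l) t * exp (α * (degExp l 1 t - 1)) *
        (1 + t * ((1 - l) * degExp l (-l) t + α * degExp l (1 - l) t)) := by
  have hnhds : ∀ᶠ s in 𝓝 t, 0 < 1 + l * s :=
    continuousAt_const.eventually_lt (by fun_prop) ht
  have hderiv : (fun s => s * deriv (fun u => exp (α * (degExp l 1 u - 1))) s) =ᶠ[𝓝 t]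
      fun s => s * (α * degExp l (1 - l) s * exp (α * (degExp l 1 s - 1))) :=
    hnhds.mono fun s hs => by dsimp only; rw [(hasDerivAt_exp_degExp hl α hs).deriv]
  have hsplit : degExp l (1 - l - l) t = degExp l (1 - l) t * degExp l (-l) t := by
    rw [degExp_mul_degExp _ _ ht, sub_eq_add_neg]
  have hG := (hasDerivAt_id' t).fun_mul
    (((hasDerivAt_degExp hl (1 - l) ht).const_mul α).fun_mul (hasDerivAt_exp_degExp hl α ht))
  rw [hderiv.deriv_eq, hG.deriv, hsplit]
  ring

end DegenerateExponential

section PowerSeries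

variable {c : ℕ → ℝ}

theorem summable_abs_natCast_mul_mul_pow (hc : ∀ r, 0 < r → Summable fun n => |c n| * r ^ n)
    {r : ℝ} (hr : 0 < r) : Summable fun n : ℕ => |(n : ℝ) * c n| * r ^ n := by
  refine .of_nonneg_of_le (fun n => by positivity) (fun n => ?_) (hc (2 * r) (by positivity))
  have hn : (n : ℝ) ≤ 2 ^ n := mod_cast n.lt_two_pow_self.le
  calc |(n : ℝ) * c n| * r ^ n = n * r ^ n * |c n| := by
        rw [abs_mul, Nat.abs_cast]; ring
    _ ≤ 2 ^ n * r ^ n * |c n| := by gcongr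
    _ = |c n| * (2 * r) ^ n := by ring

theorem summable_mul_pow (hc : ∀ r, 0 < r → Summable fun n => |c n| * r ^ n) (t : ℝ) :
    Summable fun n => c n * t ^ n := by
  refine .of_norm_bounded (hc (|t| + 1) (by positivity)) fun n => ?_
  rw [norm_mul, norm_pow, Real.norm_eq_abs, Real.norm_eq_abs]
  gcongr
  linarith

theorem hasDerivAt_tsum_mul_pow (hc : ∀ r, 0 < r → Summable fun n => |c n| * r ^ n) (t : ℝ) :
    HasDerivAt (fun x => ∑' n, c n * x ^ n) (∑' n, c n * (n * t ^ (n - 1))) t := by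
  set R := |t| + 1
  have hR : 1 ≤ R := by simp [R]
  have hbound : ∀ n, ∀ y ∈ Metric.ball (0 : ℝ) R,
      ‖c n * (n * y ^ (n - 1))‖ ≤ |(n : ℝ) * c n| * R ^ n := by
    intro n y hy
    rw [mem_ball_zero_iff, Real.norm_eq_abs] at hy
    calc ‖c n * (n * y ^ (n - 1))‖ = |(n : ℝ) * c n| * |y| ^ (n - 1) := by
          rw [Real.norm_eq_abs, abs_mul, abs_mul, abs_mul, abs_pow]; ring
      _ ≤ |(n : ℝ) * c n| * R ^ (n - 1) := by gcongr
      _ ≤ |(n : ℝ) * c n| * R ^ n := by gcongr; exact n.sub_le 1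
  exact hasDerivAt_tsum_of_isPreconnected (summable_abs_natCast_mul_mul_pow hc (by positivity))
    Metric.isOpen_ball (convex_ball 0 R).isPreconnected
    (fun (n : ℕ) y _ => (hasDerivAt_pow n y).const_mul (c n)) hbound
    (Metric.mem_ball_self (by positivity)) (summable_mul_pow hc 0) (by simp [R])

theorem hasSum_natCast_mul_mul_pow (hc : ∀ r, 0 < r → Summable fun n => |c n| * r ^ n)
    (t : ℝ) :
    HasSum (fun n : ℕ => (n : ℝ) * c n * t ^ n)
      (t * deriv (fun x => ∑' n, c n * x ^ n) t) := by
  have hterm : ∀ n : ℕ, t * (c n * (n * t ^ (n - 1))) = n * c n * t ^ n := by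
    rintro (_ | n)
    · simp
    · simp only [Nat.add_sub_cancel, pow_succ]; ring
  rw [(hasDerivAt_tsum_mul_pow hc t).deriv, ← tsum_mul_left, tsum_congr hterm]
  exact (summable_mul_pow (c := fun n : ℕ => n * c n)
    (fun r hr => summable_abs_natCast_mul_mul_pow hc hr) t).hasSum

end PowerSeries

theorem nonneg_of_hasSum_one_of_tsum_ofReal_eq_one {ι : Type*} {p : ι → ℝ} (hp : HasSum p 1)
    (h : ∑' i, ENNReal.ofReal (p i) = 1) (i : ι) : 0 ≤ p i := by
  by_contra! hi
  have hmax : HasSum (fun i => max (p i) 0) 1 := by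
    have := ENNReal.hasSum_toReal (h ▸ ENNReal.one_ne_top)
    rw [← ENNReal.tsum_toReal_eq fun _ => ENNReal.ofReal_ne_top, h] at this
    simpa only [ENNReal.toReal_ofReal', ENNReal.toReal_one] using this
  exact (hasSum_lt (fun i => le_max_left _ _) (hi.trans_le (le_max_right _ _)) hp hmax).false

section NatValued

variable {Ω : Type*} [MeasurableSpace Ω] {P : Measure Ω} {X : Ω → ℕ}

theorem tsum_measure_fiber_eq_one [IsProbabilityMeasure P] (hX : Measurable X) :
    ∑' n, P {ω | X ω = n} = 1 := by
  change ∑' n, P (X ⁻¹' {n}) = 1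
  rw [← tsum_univ, tsum_measure_preimage_singleton Set.countable_univ
    (fun n _ => hX (measurableSet_singleton n))]
  simp

theorem integral_comp_eq_of_hasSum (hX : Measurable X) {p : ℕ → ℝ} (hp : ∀ n, 0 ≤ p n)
    (hP : ∀ n, P {ω | X ω = n} = ENNReal.ofReal (p n)) {f : ℕ → ℝ} (hf : ∀ n, 0 ≤ f n)
    {a : ℝ} (hfp : HasSum (fun n => f n * p n) a) :
    ∫ ω, f (X ω) ∂P = a := by
  rw [← hfp.tsum_eq, integral_eq_lintegral_of_nonneg_ae (ae_of_all _ fun ω => hf _)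
      (measurable_from_nat.comp hX).aestronglyMeasurable,
    ← lintegral_map (f := fun n => ENNReal.ofReal (f n)) measurable_from_nat hX,
    lintegral_countable',
    ← ENNReal.toReal_ofReal (tsum_nonneg fun n => mul_nonneg (hf n) (hp n)),
    ENNReal.ofReal_tsum_of_nonneg (fun n => mul_nonneg (hf n) (hp n)) hfp.summable]
  congr 1
  refine tsum_congr fun n => ?_
  rw [Measure.map_apply hX (measurableSet_singleton n), ENNReal.ofReal_mul (hf n)]
  exact congrArg _ (hP n)

variable {c : ℕ → ℝ} {g : ℝ → ℝ} {C θ : ℝ}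

theorem coeff_nonneg_of_measure_fiber_eq [IsProbabilityMeasure P] (hX : Measurable X)
    (hC : 0 < C) (hθ : 0 < θ) (hsum : HasSum (fun n => C * (c n * θ ^ n)) 1)
    (hP : ∀ n, P {ω | X ω = n} = ENNReal.ofReal (C * (c n * θ ^ n))) (n : ℕ) :
    0 ≤ c n := by
  have hp := nonneg_of_hasSum_one_of_tsum_ofReal_eq_one hsum
    (by simpa only [hP] using tsum_measure_fiber_eq_one (P := P) hX) n
  exact (mul_nonneg_iff_of_pos_right (pow_pos hθ n)).mp ((mul_nonneg_iff_of_pos_left hC).mp hp)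

theorem integral_natCast_eq_of_measure_fiber_eq (hX : Measurable X) (hc0 : ∀ n, 0 ≤ c n)
    (hc : ∀ r, 0 < r → Summable fun n => |c n| * r ^ n) (hC : 0 ≤ C) (hθ : 0 ≤ θ)
    (hg : ∀ᶠ x in 𝓝 θ, HasSum (fun n => c n * x ^ n) (g x))
    (hP : ∀ n, P {ω | X ω = n} = ENNReal.ofReal (C * (c n * θ ^ n))) :
    ∫ ω, (X ω : ℝ) ∂P = C * (θ * deriv g θ) := by
  have hgθ : (fun x => ∑' n, c n * x ^ n) =ᶠ[𝓝 θ] g := hg.mono fun x hx => hx.tsum_eq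
  refine integral_comp_eq_of_hasSum hX (fun n => by have := hc0 n; positivity) hP
    Nat.cast_nonneg ?_
  rw [← hgθ.deriv_eq]
  exact ((hasSum_natCast_mul_mul_pow hc θ).mul_left C).congr_fun fun n => by ring

theorem integral_natCast_sq_eq_of_measure_fiber_eq (hX : Measurable X) (hc0 : ∀ n, 0 ≤ c n)
    (hc : ∀ r, 0 < r → Summable fun n => |c n| * r ^ n) (hC : 0 ≤ C) (hθ : 0 ≤ θ)
    (hg : ∀ᶠ x in 𝓝 θ, HasSum (fun n => c n * x ^ n) (g x))
    (hP : ∀ n, P {ω | X ω = n} = ENNReal.ofReal (C * (c n * θ ^ n))) :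
    ∫ ω, (X ω : ℝ) ^ 2 ∂P = C * (θ * deriv (fun t => t * deriv g t) θ) := by
  have hgθ : (fun x => ∑' n, c n * x ^ n) =ᶠ[𝓝 θ] g := hg.mono fun x hx => hx.tsum_eq
  have hderiv : (fun x => ∑' n : ℕ, n * c n * x ^ n) =ᶠ[𝓝 θ] fun t => t * deriv g t :=
    hgθ.deriv.mono fun t ht => by
      dsimp only
      rw [← ht, (hasSum_natCast_mul_mul_pow hc t).tsum_eq]
  refine integral_comp_eq_of_hasSum hX (f := fun n => (n : ℝ) ^ 2)
    (fun n => by have := hc0 n; positivity) hP (fun n => by positivity) ?_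
  rw [← hderiv.deriv_eq]
  have hmoment := hasSum_natCast_mul_mul_pow (c := fun n : ℕ => n * c n)
    (fun r hr => summable_abs_natCast_mul_mul_pow hc hr) θ
  exact (hmoment.mul_left C).congr_fun fun n => by ring

end NatValued

theorem degenerate_bell_variance_general (l α θ : ℝ) (hl : l ∈ Set.Ioc (0 : ℝ) 1) (hθ : 0 < θ)
    (φ : ℕ → ℝ → ℝ)
    (hφ : ∀ x t : ℝ, 0 < 1 + l * t →
      HasSum (fun n : ℕ => φ n x * t ^ n / (n.factorial : ℝ))
        (Real.exp (x * (degExp l 1 t - 1))))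
    {Ω : Type*} [MeasurableSpace Ω] (P : Measure Ω) [IsProbabilityMeasure P]
    (X : Ω → ℕ) (hXmeas : Measurable X)
    (hX : ∀ k : ℕ, P {ω | X ω = k} =
      ENNReal.ofReal (Real.exp (-(α * (degExp l 1 θ - 1))) * θ ^ k * φ k α / (k.factorial : ℝ))) :
    (∫ ω, ((X ω : ℝ)) ^ 2 ∂P) - (∫ ω, (X ω : ℝ) ∂P) ^ 2 =
      θ * α * (1 + θ * (1 - l) * degExp l (-l) θ) * degExp l (1 - l) θ := by
  obtain ⟨hl0, -⟩ := hl
  set F : ℝ → ℝ := fun t => exp (α * (degExp l 1 t - 1))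
  set c : ℕ → ℝ := fun n => φ n α / n.factorial
  have hC : 0 < (F θ)⁻¹ := inv_pos.2 (exp_pos _)
  have hcF : ∀ t, 0 < t → HasSum (fun n => c n * t ^ n) (F t) := fun t ht =>
    (hφ α t (by positivity)).congr_fun fun n => by ring
  have hP : ∀ k, P {ω | X ω = k} = ENNReal.ofReal ((F θ)⁻¹ * (c k * θ ^ k)) := fun k => by
    rw [hX k, ← exp_neg]
    congr 1
    simp only [c]
    ring
  have hc0 := coeff_nonneg_of_measure_fiber_eq hXmeas hC hθ
    (inv_mul_cancel₀ (exp_pos _).ne' ▸ (hcF θ hθ).mul_left (F θ)⁻¹) hP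
  have hc : ∀ r, 0 < r → Summable fun n => |c n| * r ^ n := fun r hr => by
    simpa only [abs_of_nonneg (hc0 _)] using (hcF r hr).summable
  have hgF : ∀ᶠ t in 𝓝 θ, HasSum (fun n => c n * t ^ n) (F t) :=
    eventually_of_mem (Ioi_mem_nhds hθ) hcF
  have hθl : 0 < 1 + l * θ := by positivity
  rw [integral_natCast_sq_eq_of_measure_fiber_eq hXmeas hc0 hc hC.le hθ.le hgF hP,
    integral_natCast_eq_of_measure_fiber_eq hXmeas hc0 hc hC.le hθ.le hgF hP,
    deriv_mul_deriv_exp_degExp hl0.ne' α hθl, (hasDerivAt_exp_degExp hl0.ne' α hθl).deriv]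
  simp only [F]
  field_simp
  ring

theorem degenerate_bell_variance (l α θ : ℝ) (hl : l ∈ Set.Ioc (0 : ℝ) 1) (hα : 0 < α) (hθ : 0 < θ)
    (φ : ℕ → ℝ → ℝ)
    (hφ : ∀ x t : ℝ, 0 < 1 + l * t →
      HasSum (fun n : ℕ => φ n x * t ^ n / (n.factorial : ℝ))
        (Real.exp (x * (degExp l 1 t - 1))))
    {Ω : Type*} [MeasurableSpace Ω] (P : Measure Ω) [IsProbabilityMeasure P]
    (X : Ω → ℕ) (hXmeas : Measurable X)
    (hX : ∀ k : ℕ, P {ω | X ω = k} =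
      ENNReal.ofReal (Real.exp (-(α * (degExp l 1 θ - 1))) * θ ^ k * φ k α / (k.factorial : ℝ))) :
    (∫ ω, ((X ω : ℝ)) ^ 2 ∂P) - (∫ ω, (X ω : ℝ) ∂P) ^ 2 =
      θ * α * (1 + θ * (1 - l) * degExp l (-l) θ) * degExp l (1 - l) θ :=
  degenerate_bell_variance_general l α θ hl hθ φ hφ P X hXmeas hX
end
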